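/- Let G ⊆ [d] × [n] be a bipartite graph and M = M(G) its rank-d transversal matroid on [n], assumed to have at least one basis. Then the matroid basis polytope of M (the convex hull in ℝⁿ of the indicator vectors of the bases) equals the set of x ∈ ℝⁿ satisfying: x₁ + ⋯ + x_n = d; 0 ≤ x_j ≤ 1 for all j; and for every I ⊆ [d], ∑_{j ∈ J_I(G)} x_j ≥ |I|. -/

import Mathlib

open Finset

/-- The neighborhood `J_I(G)` of a set `I` of left vertices. -/
def nbr {d n : ℕ} (G : Finset (Fin d × Fin n)) (I : Finset (Fin d)) : Finset (Fin n) :=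
  (G.filter (fun e => e.1 ∈ I)).image Prod.snd

/-- `B` is a basis of the transversal matroid of `G`: `G` contains a matching onto `B`. -/
def IsTransversalBasis {d n : ℕ} (G : Finset (Fin d × Fin n)) (B : Finset (Fin n)) : Prop :=
  ∃ σ : Fin d → Fin n, Function.Injective σ ∧ (∀ i, (i, σ i) ∈ G) ∧
    Finset.image σ Finset.univ = B

lemma mem_nbr {d n : ℕ} {G : Finset (Fin d × Fin n)} {I : Finset (Fin d)} {j : Fin n} :
    j ∈ nbr G I ↔ ∃ i ∈ I, (i, j) ∈ G := by
  simp only [nbr, mem_image, mem_filter]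
  constructor
  · rintro ⟨⟨i, j'⟩, ⟨hG, hi⟩, rfl⟩
    exact ⟨i, hi, hG⟩
  · rintro ⟨i, hi, hG⟩
    exact ⟨(i, j), ⟨hG, hi⟩, rfl⟩

lemma cut_ineq {d n : ℕ} {G : Finset (Fin d × Fin n)} {x : Fin n → ℝ}
    (hsum : ∑ j, x j = (d : ℝ)) (hx0 : ∀ j, 0 ≤ x j)
    (hI : ∀ I : Finset (Fin d), (I.card : ℝ) ≤ ∑ j ∈ nbr G I, x j)
    (hne : ∀ i : Fin d, (nbr G {i}).Nonempty) (c : Fin n → ℝ) :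
    ∑ j, c j * x j ≤ ∑ i, (nbr G {i}).sup' (hne i) c := by
  classical
  rcases Nat.eq_zero_or_pos n with hn | hn
  · subst hn
    haveI : IsEmpty (Fin d) := ⟨fun i => by
      obtain ⟨j, _⟩ := hne i; exact j.elim0⟩
    simp
  haveI : Nonempty (Fin n) := ⟨⟨0, hn⟩⟩
  have huniv : (univ : Finset (Fin n)).Nonempty := univ_nonempty
  -- strong induction on the number of non-minimal coordinates of c
  suffices H : ∀ k : ℕ, ∀ c : Fin n → ℝ,
      (univ.filter (fun j => univ.inf' huniv c < c j)).card ≤ k →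
      ∑ j, c j * x j ≤ ∑ i, (nbr G {i}).sup' (hne i) c by
    exact H _ c le_rfl
  intro k
  induction k with
  | zero =>
    intro c hc
    have hconst : ∀ j, c j = univ.inf' huniv c := by
      intro j
      have h1 : univ.inf' huniv c ≤ c j := inf'_le _ (mem_univ j)
      by_contra h
      have : j ∈ univ.filter (fun j => univ.inf' huniv c < c j) := by
        simp only [mem_filter, mem_univ, true_and]
        exact lt_of_le_of_ne h1 (fun h' => h h'.symm)
      have := card_pos.2 ⟨j, this⟩
      omega
    set m := univ.inf' huniv c with hm
    have heq : ∑ j, c j * x j = ∑ i, (nbr G {i}).sup' (hne i) c := by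
      have e1 : ∑ j, c j * x j = m * (d : ℝ) := by
        rw [Finset.sum_congr rfl fun j _ => by rw [hconst j], ← Finset.mul_sum, hsum]
      have e2 : ∑ i : Fin d, (nbr G {i}).sup' (hne i) c = m * (d : ℝ) := by
        have e3 : ∀ i : Fin d, (nbr G {i}).sup' (hne i) c = m := by
          intro i
          refine le_antisymm (sup'_le _ _ fun j _ => (hconst j).le) ?_
          exact le_sup'_of_le _ ((hne i).choose_spec) (hconst _).ge
        rw [Finset.sum_congr rfl fun i _ => e3 i]
        simp [mul_comm]
      rw [e1, e2]
    exact heq.le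
  | succ k ih =>
    intro c hc
    set m := univ.inf' huniv c with hm
    set T := univ.filter (fun j => m < c j) with hT
    by_cases hTe : T = ∅
    · exact ih c (by rw [← hm, ← hT, hTe]; simp)
    have hTne : T.Nonempty := nonempty_iff_ne_empty.2 hTe
    set m' := T.inf' hTne c with hm'
    obtain ⟨j₁, hj₁T, hj₁⟩ := Finset.exists_mem_eq_inf' hTne c
    have hmlt : m < m' := by
      rw [hm', hj₁]; exact (mem_filter.1 hj₁T).2
    set δ := m' - m with hδdef
    have hδ : 0 < δ := by simp [hδdef]; linarith
    set c' : Fin n → ℝ := fun j => if m < c j then c j - δ else c j with hc'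
    have hcm : ∀ j, m ≤ c j := fun j => inf'_le _ (mem_univ j)
    have hc'eqoff : ∀ j, ¬ m < c j → c' j = c j := by
      intro j hj; simp [hc', hj]
    have hceq : ∀ j, ¬ m < c j → c j = m := fun j hj => le_antisymm (not_lt.1 hj) (hcm j)
    have hc'ge : ∀ j, m ≤ c' j := by
      intro j
      by_cases hj : m < c j
      · simp only [hc', if_pos hj]
        have : m' ≤ c j := inf'_le _ (by simp [hT, hj])
        linarith [hδ]
      · rw [hc'eqoff j hj]; exact hcm j
    -- the minimum of c' is still m
    obtain ⟨j₀, _, hj₀⟩ := Finset.exists_mem_eq_inf' huniv c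
    have hj₀m : c j₀ = m := hj₀.symm
    have hc'j₀ : c' j₀ = m := by
      rw [hc'eqoff j₀ (by rw [hj₀m]; exact lt_irrefl _), hj₀m]
    have hinf' : univ.inf' huniv c' = m := by
      refine le_antisymm (hc'j₀ ▸ inf'_le _ (mem_univ j₀)) (le_inf' _ _ fun j _ => hc'ge j)
    -- the new set of non-minimal coordinates is strictly smaller
    have hT'ss : univ.filter (fun j => m < c' j) ⊂ T := by
      constructor
      · intro j hj
        simp only [mem_filter, mem_univ, true_and] at hj
        simp only [hT, mem_filter, mem_univ, true_and]
        by_contra hjm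
        rw [hc'eqoff j hjm] at hj
        exact hjm hj
      · intro hsub
        have := hsub hj₁T
        simp only [mem_filter, mem_univ, true_and] at this
        have hc'j₁ : c' j₁ = m := by
          simp only [hc', if_pos (mem_filter.1 hj₁T).2]
          rw [← hj₁]; simp [hδdef, hm']
        rw [hc'j₁] at this; exact lt_irrefl _ this
    have hcard : (univ.filter (fun j => univ.inf' huniv c' < c' j)).card ≤ k := by
      rw [hinf']
      have := Finset.card_lt_card hT'ss
      have hTk : T.card ≤ k + 1 := hc
      omega
    have IH := ih c' hcard
    -- decomposition identity for c
    have hdecomp : ∀ j, c j = c' j + (if m < c j then δ else 0) := by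
      intro j; by_cases hj : m < c j <;> simp [hc', hj]
    -- the bad set of left vertices
    set I₀ := univ.filter (fun i : Fin d => ∀ j ∈ nbr G {i}, ¬ m < c j) with hI₀
    -- bound on sum over T
    have hTbound : ∑ j ∈ T, x j ≤ (d : ℝ) - I₀.card := by
      have h1 : (I₀.card : ℝ) ≤ ∑ j ∈ nbr G I₀, x j := hI _
      have hsub : nbr G I₀ ⊆ univ \ T := by
        intro j hj
        obtain ⟨i, hiI, hij⟩ := mem_nbr.1 hj
        simp only [hI₀, mem_filter, mem_univ, true_and] at hiI
        have : ¬ m < c j := hiI j (mem_nbr.2 ⟨i, mem_singleton_self i, hij⟩)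
        simp [hT, this]
      have h2 : ∑ j ∈ nbr G I₀, x j ≤ ∑ j ∈ univ \ T, x j :=
        Finset.sum_le_sum_of_subset_of_nonneg hsub (fun j _ _ => hx0 j)
      have h3 : ∑ j ∈ univ \ T, x j = (d : ℝ) - ∑ j ∈ T, x j := by
        rw [Finset.sum_sdiff_eq_sub (subset_univ T), hsum]
      linarith
    -- per-vertex relation between sup' c and sup' c'
    have hsupi : ∀ i : Fin d, (nbr G {i}).sup' (hne i) c =
        (nbr G {i}).sup' (hne i) c' + (if i ∈ I₀ then 0 else δ) := by
      intro i
      by_cases hiI : i ∈ I₀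
      · simp only [if_pos hiI, add_zero]
        refine Finset.sup'_congr _ rfl fun j hj => ?_
        simp only [hI₀, mem_filter, mem_univ, true_and] at hiI
        exact (hc'eqoff j (hiI j hj)).symm
      · simp only [if_neg hiI]
        simp only [hI₀, mem_filter, mem_univ, true_and, not_forall, not_not] at hiI
        obtain ⟨j₂, hj₂mem, hj₂⟩ := hiI
        refine le_antisymm (sup'_le _ _ fun j hj => ?_) ?_
        · have h4 : c' j ≤ (nbr G {i}).sup' (hne i) c' := le_sup' _ hj
          have h9 : c j ≤ c' j + δ := by
            by_cases hjm : m < c j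
            · rw [hdecomp j, if_pos hjm]
            · rw [hdecomp j, if_neg hjm]; linarith
          linarith
        · obtain ⟨j₃, hj₃mem, hj₃⟩ := Finset.exists_mem_eq_sup' (hne i) c'
          by_cases hjm : m < c j₃
          · have : c' j₃ + δ = c j₃ := by simp [hc', hjm]
            rw [hj₃, this]
            exact le_sup' _ hj₃mem
          · have h5 : c' j₃ = m := by rw [hc'eqoff j₃ hjm]; exact hceq j₃ hjm
            rw [hj₃, h5]
            have : m + δ = m' := by simp [hδdef]
            rw [this]
            exact le_sup'_of_le _ hj₂mem (inf'_le _ (by simp [hT, hj₂]))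
    -- put it together
    have hLHS : ∑ j, c j * x j = ∑ j, c' j * x j + δ * ∑ j ∈ T, x j := by
      have : ∀ j, c j * x j = c' j * x j + (if m < c j then δ * x j else 0) := by
        intro j
        by_cases hj : m < c j
        · rw [if_pos hj]
          have h10 : c j = c' j + δ := by rw [hdecomp j, if_pos hj]
          rw [h10]; ring
        · rw [if_neg hj, hc'eqoff j hj, add_zero]
      rw [Finset.sum_congr rfl (fun j _ => this j), Finset.sum_add_distrib]
      congr 1
      rw [Finset.mul_sum, hT, Finset.sum_filter]
    have hRHS : ∑ i, (nbr G {i}).sup' (hne i) c =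
        ∑ i, (nbr G {i}).sup' (hne i) c' + δ * ((d : ℝ) - I₀.card) := by
      rw [Finset.sum_congr rfl (fun i _ => hsupi i), Finset.sum_add_distrib]
      congr 1
      have hcardsplit : (univ.filter (fun i : Fin d => i ∈ I₀)).card
          + (univ.filter (fun i : Fin d => i ∉ I₀)).card = d := by
        rw [Finset.card_filter_add_card_filter_not]
        simp
      have hfiltI : (univ.filter (fun i : Fin d => i ∈ I₀)) = I₀ := by
        ext i; simp
      have h6 : ∑ i : Fin d, (if i ∈ I₀ then (0:ℝ) else δ)
          = ((univ.filter (fun i : Fin d => i ∉ I₀)).card : ℝ) * δ := by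
        rw [Finset.sum_ite, Finset.sum_const, Finset.sum_const]
        simp
      rw [h6]
      have h7 : ((univ.filter (fun i : Fin d => i ∉ I₀)).card : ℝ) = (d : ℝ) - I₀.card := by
        rw [hfiltI] at hcardsplit
        have := hcardsplit
        push_cast [← this]
        ring
      rw [h7]; ring
    rw [hLHS, hRHS]
    have h8 := mul_le_mul_of_nonneg_left hTbound hδ.le
    linarith [IH]

lemma exists_flow {d n : ℕ} {G : Finset (Fin d × Fin n)} {x : Fin n → ℝ}
    (hsum : ∑ j, x j = (d : ℝ)) (hx0 : ∀ j, 0 ≤ x j)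
    (hI : ∀ I : Finset (Fin d), (I.card : ℝ) ≤ ∑ j ∈ nbr G I, x j)
    (hne : ∀ i : Fin d, (nbr G {i}).Nonempty) :
    ∃ y : Fin d → Fin n → ℝ, (∀ i j, 0 ≤ y i j) ∧ (∀ i j, (i, j) ∉ G → y i j = 0) ∧
      (∀ i, ∑ j, y i j = 1) ∧ (∀ j, ∑ i, y i j = x j) := by
  classical
  set K : Set (Fin d → Fin n → ℝ) :=
    {y | (∀ i j, 0 ≤ y i j) ∧ (∀ i j, (i, j) ∉ G → y i j = 0) ∧ (∀ i, ∑ j, y i j = 1)}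
    with hK
  set Φ : (Fin d → Fin n → ℝ) → (Fin n → ℝ) := fun y j => ∑ i, y i j with hΦ
  have hev : ∀ (i : Fin d) (j : Fin n), Continuous fun y : Fin d → Fin n → ℝ => y i j :=
    fun i j => (continuous_apply j).comp (continuous_apply i)
  have hΦcont : Continuous Φ :=
    continuous_pi fun j => continuous_finset_sum _ fun i _ => hev i j
  have hKclosed : IsClosed K := by
    have e : K = (⋂ i, ⋂ j, {y : Fin d → Fin n → ℝ | 0 ≤ y i j}) ∩
        ((⋂ i, ⋂ j, {y : Fin d → Fin n → ℝ | (i, j) ∉ G → y i j = 0}) ∩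
          (⋂ i, {y : Fin d → Fin n → ℝ | ∑ j, y i j = 1})) := by
      ext y
      simp only [hK, Set.mem_setOf_eq, Set.mem_inter_iff, Set.mem_iInter]

    rw [e]
    refine IsClosed.inter
      (isClosed_iInter fun i => isClosed_iInter fun j =>
        isClosed_le continuous_const (hev i j)) (IsClosed.inter ?_ ?_)
    · refine isClosed_iInter fun i => isClosed_iInter fun j => ?_
      by_cases hij : (i, j) ∈ G
      · have : {y : Fin d → Fin n → ℝ | (i, j) ∉ G → y i j = 0} = Set.univ := by
          ext y; simp [hij]
        rw [this]; exact isClosed_univ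
      · have : {y : Fin d → Fin n → ℝ | (i, j) ∉ G → y i j = 0}
            = {y : Fin d → Fin n → ℝ | y i j = 0} := by
          ext y; simp [hij]
        rw [this]; exact isClosed_eq (hev i j) continuous_const
    · exact isClosed_iInter fun i =>
        isClosed_eq (continuous_finset_sum _ fun j _ => hev i j) continuous_const
  have hKcomp : IsCompact K := by
    refine IsCompact.of_isClosed_subset
      (isCompact_univ_pi fun i => isCompact_univ_pi fun j => isCompact_Icc (a := (0:ℝ)) (b := 1))
      hKclosed ?_
    intro y hy
    obtain ⟨hy0, _, hy1⟩ := hy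
    refine Set.mem_univ_pi.2 fun i => Set.mem_univ_pi.2 fun j => ?_
    refine ⟨hy0 i j, ?_⟩
    calc y i j ≤ ∑ j', y i j' :=
          Finset.single_le_sum (fun j' _ => hy0 i j') (mem_univ j)
      _ = 1 := hy1 i
  have hKconvex : Convex ℝ K := by
    rintro y hy z hz a b ha hb hab
    obtain ⟨hy0, hys, hy1⟩ := hy
    obtain ⟨hz0, hzs, hz1⟩ := hz
    refine ⟨fun i j => ?_, fun i j hij => ?_, fun i => ?_⟩
    · simp only [Pi.add_apply, Pi.smul_apply, smul_eq_mul]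
      exact add_nonneg (mul_nonneg ha (hy0 i j)) (mul_nonneg hb (hz0 i j))
    · simp only [Pi.add_apply, Pi.smul_apply, smul_eq_mul, hys i j hij, hzs i j hij]
      ring
    · simp only [Pi.add_apply, Pi.smul_apply, smul_eq_mul]
      rw [Finset.sum_add_distrib, ← Finset.mul_sum, ← Finset.mul_sum, hy1 i, hz1 i]
      simpa using hab
  have hΦlin : IsLinearMap ℝ Φ := by
    constructor
    · intro y z; funext j; simp [hΦ, Finset.sum_add_distrib]
    · intro a y; funext j; simp [hΦ, Finset.mul_sum]
  by_contra hxQ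
  have hxQ' : x ∉ Φ '' K := by
    rintro ⟨y, hyK, hyx⟩
    exact hxQ ⟨y, hyK.1, hyK.2.1, hyK.2.2, fun j => congrFun hyx j⟩
  obtain ⟨f, u, hfQ, hfx⟩ := geometric_hahn_banach_closed_point
    (hKconvex.is_linear_image hΦlin) (hKcomp.image hΦcont).isClosed hxQ'
  set c : Fin n → ℝ := fun j => f (fun j' => if j = j' then 1 else 0) with hc
  have hfeval : ∀ z : Fin n → ℝ, f z = ∑ j, z j * c j := by
    intro z
    have hz := pi_eq_sum_univ z
    calc f z = f (∑ j, z j • fun j' => if j = j' then (1:ℝ) else 0) := by rw [← hz]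
      _ = ∑ j, z j * c j := by
        rw [map_sum]
        refine Finset.sum_congr rfl fun j _ => ?_
        rw [map_smul]; simp [hc]
  choose ji hjimem hjisup using fun i => Finset.exists_mem_eq_sup' (hne i) c
  set y₀ : Fin d → Fin n → ℝ := fun i j => if j = ji i then 1 else 0 with hy₀
  have hy₀K : y₀ ∈ K := by
    refine ⟨fun i j => ?_, fun i j hij => ?_, fun i => ?_⟩
    · simp only [hy₀]; split <;> norm_num
    · simp only [hy₀]
      split
      · next h =>
        exfalso
        obtain ⟨i', hi', hedge⟩ := mem_nbr.1 (hjimem i)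
        rw [mem_singleton] at hi'
        subst hi'; subst h
        exact hij hedge
      · rfl
    · simp [hy₀]
  have hfy₀ : f (Φ y₀) = ∑ i, c (ji i) := by
    rw [hfeval]
    have : ∀ j, (Φ y₀) j * c j = ∑ i, if j = ji i then c j else 0 := by
      intro j
      simp only [hΦ, hy₀]
      rw [Finset.sum_mul]
      refine Finset.sum_congr rfl fun i _ => ?_
      split <;> simp
    rw [Finset.sum_congr rfl fun j _ => this j, Finset.sum_comm]
    refine Finset.sum_congr rfl fun i _ => ?_
    simp
  have h1 : f x ≤ f (Φ y₀) := by
    rw [hfeval x, hfy₀]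
    have := cut_ineq hsum hx0 hI hne c
    calc ∑ j, x j * c j = ∑ j, c j * x j := by
          exact Finset.sum_congr rfl fun j _ => mul_comm _ _
      _ ≤ ∑ i, (nbr G {i}).sup' (hne i) c := this
      _ = ∑ i, c (ji i) := Finset.sum_congr rfl fun i _ => hjisup i
  have h2 : f (Φ y₀) < u := hfQ _ ⟨y₀, hy₀K, rfl⟩
  linarith

noncomputable def bigM {d n : ℕ} (x : Fin n → ℝ) (y : Fin d → Fin n → ℝ) :
    Matrix (Fin d ⊕ Fin n) (Fin d ⊕ Fin n) ℝ
  | Sum.inl _, Sum.inl _ => 0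
  | Sum.inl i, Sum.inr j => y i j
  | Sum.inr j, Sum.inl _ => x j / d
  | Sum.inr j, Sum.inr j' => if j = j' then 1 - x j else 0

@[simp] lemma bigM_ll {d n : ℕ} (x : Fin n → ℝ) (y : Fin d → Fin n → ℝ) (i k : Fin d) :
    bigM x y (Sum.inl i) (Sum.inl k) = 0 := rfl
@[simp] lemma bigM_lr {d n : ℕ} (x : Fin n → ℝ) (y : Fin d → Fin n → ℝ) (i : Fin d) (j : Fin n) :
    bigM x y (Sum.inl i) (Sum.inr j) = y i j := rfl
@[simp] lemma bigM_rl {d n : ℕ} (x : Fin n → ℝ) (y : Fin d → Fin n → ℝ) (j : Fin n) (k : Fin d) :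
    bigM x y (Sum.inr j) (Sum.inl k) = x j / d := rfl
@[simp] lemma bigM_rr {d n : ℕ} (x : Fin n → ℝ) (y : Fin d → Fin n → ℝ) (j j' : Fin n) :
    bigM x y (Sum.inr j) (Sum.inr j') = if j = j' then 1 - x j else 0 := rfl

lemma sum_ite_image {d n : ℕ} (τ : Fin d → Fin n) (hinj : Function.Injective τ) (j : Fin n) :
    ∑ i : Fin d, (if τ i = j then (1:ℝ) else 0) = if j ∈ Finset.image τ univ then 1 else 0 := by
  classical
  by_cases hj : j ∈ Finset.image τ univ
  · obtain ⟨i₀, _, hi₀⟩ := mem_image.1 hj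
    rw [if_pos hj, Finset.sum_eq_single i₀]
    · rw [if_pos hi₀]
    · intro i _ hnei
      rw [if_neg]; intro h; exact hnei (hinj (h.trans hi₀.symm))
    · intro h; exact absurd (mem_univ i₀) h
  · rw [if_neg hj, Finset.sum_eq_zero]
    intro i _
    rw [if_neg]; intro h; exact hj (mem_image.2 ⟨i, mem_univ i, h⟩)

lemma hard_dir {d n : ℕ} {G : Finset (Fin d × Fin n)}
    (hbasis : ∃ B, IsTransversalBasis G B) {x : Fin n → ℝ}
    (hsum : ∑ j, x j = (d : ℝ)) (hbd : ∀ j, 0 ≤ x j ∧ x j ≤ 1)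
    (hI : ∀ I : Finset (Fin d), (I.card : ℝ) ≤ ∑ j ∈ nbr G I, x j) :
    x ∈ convexHull ℝ {x : Fin n → ℝ | ∃ B : Finset (Fin n), IsTransversalBasis G B ∧
      x = fun j => if j ∈ B then (1 : ℝ) else 0} := by
  classical
  obtain ⟨B₀, σ₀, hσ₀inj, hσ₀edge, hσ₀im⟩ := hbasis
  have hx0 : ∀ j, 0 ≤ x j := fun j => (hbd j).1
  have hx1 : ∀ j, x j ≤ 1 := fun j => (hbd j).2
  have hne : ∀ i : Fin d, (nbr G {i}).Nonempty :=
    fun i => ⟨σ₀ i, mem_nbr.2 ⟨i, mem_singleton_self i, hσ₀edge i⟩⟩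
  rcases Nat.eq_zero_or_pos d with hd | hd
  · subst hd
    have hx00 : ∀ j, x j = 0 := by
      intro j
      have := (Finset.sum_eq_zero_iff_of_nonneg (fun j _ => hx0 j)).1 (by rw [hsum]; norm_num)
      exact this j (mem_univ j)
    apply subset_convexHull
    refine ⟨∅, ⟨Fin.elim0, fun a => a.elim0, fun i => i.elim0, by simp⟩, ?_⟩
    funext j; simp [hx00 j]
  obtain ⟨y, hy0, hysupp, hyrow, hycol⟩ := exists_flow hsum hx0 hI hne
  have hdne : (d : ℝ) ≠ 0 := Nat.cast_ne_zero.2 hd.ne'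
  set M := bigM x y with hMdef
  have hM : M ∈ doublyStochastic ℝ (Fin d ⊕ Fin n) := by
    rw [mem_doublyStochastic_iff_sum]
    refine ⟨?_, ?_, ?_⟩
    · rintro (i | j) (k | j')
      · simp [hMdef]
      · simp [hMdef, hy0]
      · simp only [hMdef, bigM_rl]
        exact div_nonneg (hx0 j) (by positivity)
      · simp only [hMdef, bigM_rr]
        split
        · linarith [hx1 j]
        · exact le_refl 0
    · rintro (i | j)
      · rw [Fintype.sum_sum_type]
        simp [hMdef, hyrow i]
      · rw [Fintype.sum_sum_type]
        simp only [hMdef, bigM_rl, bigM_rr]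
        rw [Finset.sum_const, Finset.sum_ite_eq univ j (fun j' => 1 - x j)]
        simp only [card_univ, Fintype.card_fin, mem_univ, if_pos, nsmul_eq_mul]
        field_simp
        ring
    · rintro (k | j')
      · rw [Fintype.sum_sum_type]
        simp only [hMdef, bigM_ll, bigM_rl]
        rw [Finset.sum_const, ← Finset.sum_div, hsum]
        simp [div_self hdne]
      · rw [Fintype.sum_sum_type]
        simp only [hMdef, bigM_lr, bigM_rr]
        rw [hycol j', Finset.sum_ite_eq' univ j' (fun j => 1 - x j)]
        simp
  obtain ⟨w, hw0, hw1, hwM⟩ := exists_eq_sum_perm_of_mem_doublyStochastic hM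
  have hperm : ∀ (σ : Equiv.Perm (Fin d ⊕ Fin n)) a b,
      (σ.permMatrix ℝ) a b = if σ a = b then (1:ℝ) else 0 := by
    intro σ a b
    simp only [Equiv.Perm.permMatrix, PEquiv.toMatrix_apply, Equiv.toPEquiv_apply,
      Option.mem_def, Option.some.injEq]
  have hMeq : ∀ a b, M a b = ∑ σ : Equiv.Perm (Fin d ⊕ Fin n),
      w σ * (σ.permMatrix ℝ) a b := by
    intro a b
    rw [← hwM, Matrix.sum_apply]
    refine Finset.sum_congr rfl fun σ _ => ?_
    simp
  have hkey : ∀ (σ : Equiv.Perm (Fin d ⊕ Fin n)) a, w σ ≤ M a (σ a) := by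
    intro σ a
    rw [hMeq a (σ a)]
    have h2 : w σ * (σ.permMatrix ℝ) a (σ a) = w σ := by
      rw [hperm]; simp
    calc w σ = w σ * (σ.permMatrix ℝ) a (σ a) := h2.symm
      _ ≤ ∑ σ' : Equiv.Perm (Fin d ⊕ Fin n), w σ' * (σ'.permMatrix ℝ) a (σ a) := by
          refine Finset.single_le_sum
            (f := fun σ' => w σ' * (σ'.permMatrix ℝ) a (σ a))
            (fun σ' _ => mul_nonneg (hw0 σ') ?_) (mem_univ σ)
          rw [hperm]; split <;> norm_num
  set τ : Equiv.Perm (Fin d ⊕ Fin n) → Fin d → Fin n :=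
    fun σ i => Sum.elim (fun _ => σ₀ ⟨0, hd⟩) id (σ (Sum.inl i)) with hτdef
  have hτ : ∀ σ, w σ ≠ 0 → ∀ i, σ (Sum.inl i) = Sum.inr (τ σ i) := by
    intro σ hσ i
    rcases h : σ (Sum.inl i) with k | j
    · exfalso
      have h3 := hkey σ (Sum.inl i)
      rw [h] at h3
      simp only [hMdef, bigM_ll] at h3
      exact hσ (le_antisymm h3 (hw0 σ))
    · simp [hτdef, h]
  have hτinj : ∀ σ, w σ ≠ 0 → Function.Injective (τ σ) := by
    intro σ hσ a b hab
    have : σ (Sum.inl a) = σ (Sum.inl b) := by rw [hτ σ hσ a, hτ σ hσ b, hab]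
    exact Sum.inl.inj (σ.injective this)
  have hτedge : ∀ σ, w σ ≠ 0 → ∀ i, (i, τ σ i) ∈ G := by
    intro σ hσ i
    by_contra h
    have h4 := hkey σ (Sum.inl i)
    rw [hτ σ hσ i] at h4
    simp only [hMdef, bigM_lr] at h4
    rw [hysupp i _ h] at h4
    exact hσ (le_antisymm h4 (hw0 σ))
  set z : Equiv.Perm (Fin d ⊕ Fin n) → Fin n → ℝ :=
    fun σ j => if j ∈ Finset.image (τ σ) univ then 1 else 0 with hzdef
  have hzsum : ∀ σ, w σ ≠ 0 → ∀ j,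
      ∑ i : Fin d, (σ.permMatrix ℝ) (Sum.inl i) (Sum.inr j) = z σ j := by
    intro σ hσ j
    have : ∀ i : Fin d, (σ.permMatrix ℝ) (Sum.inl i) (Sum.inr j)
        = if τ σ i = j then (1:ℝ) else 0 := by
      intro i
      rw [hperm, hτ σ hσ i]
      simp
    rw [Finset.sum_congr rfl fun i _ => this i, sum_ite_image _ (hτinj σ hσ) j]
  set t' := univ.filter (fun σ : Equiv.Perm (Fin d ⊕ Fin n) => w σ ≠ 0) with ht'
  have hwt' : ∑ σ ∈ t', w σ = 1 := by
    rw [ht', Finset.sum_filter_ne_zero, hw1]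
  have hxz : ∀ j, x j = ∑ σ ∈ t', w σ * z σ j := by
    intro j
    have e1 : x j = ∑ i, M (Sum.inl i) (Sum.inr j) := by
      simp only [hMdef, bigM_lr]
      exact (hycol j).symm
    rw [e1, Finset.sum_congr rfl fun i (_ : i ∈ univ) => hMeq (Sum.inl i) (Sum.inr j),
      Finset.sum_comm]
    rw [← Finset.sum_filter_of_ne (p := fun σ => w σ ≠ 0)
      (fun σ _ h => by intro hw; rw [hw] at h; simp at h)]
    refine Finset.sum_congr rfl fun σ hσ => ?_
    rw [← Finset.mul_sum, hzsum σ (mem_filter.1 hσ).2 j]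
  have hcm := Finset.centerMass_mem_convexHull t'
    (fun σ _ => hw0 σ) (by rw [hwt']; norm_num)
    (fun σ hσ => by
      refine Set.mem_setOf_eq ▸ ⟨Finset.image (τ σ) univ,
        ⟨τ σ, hτinj σ (mem_filter.1 hσ).2, hτedge σ (mem_filter.1 hσ).2, rfl⟩, rfl⟩
      : ∀ σ ∈ t', z σ ∈ {x : Fin n → ℝ | ∃ B : Finset (Fin n), IsTransversalBasis G B ∧
          x = fun j => if j ∈ B then (1 : ℝ) else 0})
  have : t'.centerMass w z = x := by
    rw [Finset.centerMass, hwt', inv_one, one_smul]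
    funext j
    rw [Finset.sum_apply]
    rw [hxz j]
    refine Finset.sum_congr rfl fun σ _ => ?_
    simp
  rwa [this] at hcm

theorem stmt_6 (d n : ℕ) (G : Finset (Fin d × Fin n))
    (hbasis : ∃ B, IsTransversalBasis G B) :
    convexHull ℝ {x : Fin n → ℝ | ∃ B : Finset (Fin n), IsTransversalBasis G B ∧
        x = fun j => if j ∈ B then (1 : ℝ) else 0} =
      {x : Fin n → ℝ | (∑ j, x j) = d ∧ (∀ j, 0 ≤ x j ∧ x j ≤ 1) ∧
        ∀ I : Finset (Fin d), (I.card : ℝ) ≤ ∑ j ∈ nbr G I, x j} := by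
  classical
  apply Set.Subset.antisymm
  · refine convexHull_min ?_ ?_
    · rintro x ⟨B, ⟨σ, hinj, hedge, him⟩, rfl⟩
      have hcard : B.card = d := by
        rw [← him, Finset.card_image_of_injective _ hinj, card_univ, Fintype.card_fin]
      refine ⟨?_, ?_, ?_⟩
      · rw [Finset.sum_ite_mem, univ_inter, Finset.sum_const, hcard]
        simp
      · intro j
        by_cases hj : j ∈ B <;> simp [hj]
      · intro I
        have hsub : Finset.image σ I ⊆ nbr G I ∩ B := by
          intro j hj
          obtain ⟨i, hi, rfl⟩ := mem_image.1 hj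
          refine mem_inter.2 ⟨mem_nbr.2 ⟨i, hi, hedge i⟩, ?_⟩
          rw [← him]
          exact mem_image.2 ⟨i, mem_univ i, rfl⟩
        have h1 : I.card = (Finset.image σ I).card :=
          (Finset.card_image_of_injective _ hinj).symm
        have h2 : (Finset.image σ I).card ≤ (nbr G I ∩ B).card := card_le_card hsub
        have h3 : ∑ j ∈ nbr G I, (if j ∈ B then (1:ℝ) else 0) = (nbr G I ∩ B).card := by
          rw [Finset.sum_ite_mem, Finset.sum_const]
          simp
        rw [h3]
        exact_mod_cast h1 ▸ h2
    · rintro x ⟨hx1, hx2, hx3⟩ y ⟨hy1, hy2, hy3⟩ a b ha hb hab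
      refine ⟨?_, ?_, ?_⟩
      · simp only [Pi.add_apply, Pi.smul_apply, smul_eq_mul]
        rw [Finset.sum_add_distrib, ← Finset.mul_sum, ← Finset.mul_sum, hx1, hy1]
        rw [← add_mul, hab, one_mul]
      · intro j
        simp only [Pi.add_apply, Pi.smul_apply, smul_eq_mul]
        constructor
        · exact add_nonneg (mul_nonneg ha (hx2 j).1) (mul_nonneg hb (hy2 j).1)
        · have h5 : a * x j + b * y j ≤ a * 1 + b * 1 := by
            gcongr
            exacts [(hx2 j).2, (hy2 j).2]
          rw [mul_one, mul_one, hab] at h5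
          exact h5
      · intro I
        simp only [Pi.add_apply, Pi.smul_apply, smul_eq_mul]
        rw [Finset.sum_add_distrib, ← Finset.mul_sum, ← Finset.mul_sum]
        have h5 : a * (I.card : ℝ) + b * I.card ≤
            a * (∑ j ∈ nbr G I, x j) + b * (∑ j ∈ nbr G I, y j) := by
          gcongr
          exacts [hx3 I, hy3 I]
        have h6 : a * (I.card : ℝ) + b * I.card = I.card := by rw [← add_mul, hab, one_mul]
        rw [h6] at h5
        exact h5
  · rintro x ⟨hx1, hx2, hx3⟩
    exact hard_dir hbasis hx1 hx2 hx3
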